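/- Combining the potential bound with E[Σ_i p^t_i (ℓ̃^t_i)²] ≤ n and unbiasedness, Algorithm 2 with η = √(2 ln n / (Tn)) has expected regret at most √(2 T n ln n): E[Σ_t L_f(π_{σ^t, e_{i^t}}, ℓ^t)] − min_i Σ_t L_f(π_{σ^t, e_i}, ℓ^t) ≤ √(2 T n ln n). -/

import Mathlib

open Finset

attribute [local instance] Classical.propDecidable

/-- Rankings (linear orders) over `m` alternatives, as permutations of `Fin m`;
`σ a` is the position of alternative `a` (position `0` is the top). -/
abbrev Rk (m : ℕ) := Equiv.Perm (Fin m)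

/-- `π` is a distribution (an anonymous vote profile when defined on rankings). -/
def IsDist {α : Type*} [Fintype α] (π : α → ℝ) : Prop :=
  (∀ x, 0 ≤ π x) ∧ ∑ x, π x = 1

/-- The anonymous vote profile induced by weights `w` on vote profile `σ`:
`π_τ` is the fraction of the total weight placed on ranking `τ`. -/
noncomputable def anonProfile {n m : ℕ} (σ : Fin n → Rk m) (w : Fin n → ℝ) :
    Rk m → ℝ :=
  fun τ => (∑ i, if σ i = τ then w i else 0) / (∑ i, w i)

/-- Expected loss of the alternative chosen by rule `f` on profile `π`
under loss vector `ℓ`: `L_f(π, ℓ) = f(π)·ℓ`. -/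
noncomputable def expLoss {m : ℕ} (f : (Rk m → ℝ) → Fin m → ℝ)
    (π : Rk m → ℝ) (ℓ : Fin m → ℝ) : ℝ :=
  ∑ a, f π a * ℓ a

/-- The unanimous anonymous profile placing all weight on ranking `τ`. -/
noncomputable def unan {m : ℕ} (τ : Rk m) : Rk m → ℝ :=
  fun σ => if σ = τ then 1 else 0

/-- The exponential-weights distribution over voters induced by cumulative
estimated losses `L`: `p_i ∝ exp(-η L_i)`. -/
noncomputable def pvec {n : ℕ} (η : ℝ) (L : Fin n → ℝ) (i : Fin n) : ℝ :=
  Real.exp (-η * L i) / ∑ j, Real.exp (-η * L j)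

/-- Cumulative importance-weighted loss estimates of Algorithm 2 along the trajectory
`ω` (where `ω t = (i^t, a^t)` is the voter and alternative realized at step `t`):
`L̃^0 = 0` and `L̃^{t+1}_i = L̃^t_i + 1[i = i^t]·ℓ^t_{a^t}/p^t_{i^t}`. -/
noncomputable def Ltil {n m : ℕ} (η : ℝ) (ℓ : ℕ → Fin m → ℝ)
    (ω : ℕ → Fin n × Fin m) : ℕ → Fin n → ℝ
  | 0 => fun _ => 0
  | t + 1 => fun i =>
      Ltil η ℓ ω t i +
        if i = (ω t).1 then ℓ t ((ω t).2) / pvec η (Ltil η ℓ ω t) ((ω t).1) else 0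

/-- The probability that Algorithm 2 realizes the trajectory `ω` over the first `T`
steps: at each step `t`, voter `i^t` is drawn from the exponential-weights
distribution `p^t` and alternative `a^t` is drawn from `f(π_{σ^t, e_{i^t}})`. -/
noncomputable def trajProb {n m : ℕ} (η : ℝ) (f : (Rk m → ℝ) → Fin m → ℝ)
    (σ : ℕ → Fin n → Rk m) (ℓ : ℕ → Fin m → ℝ) (ω : ℕ → Fin n × Fin m) (T : ℕ) : ℝ :=
  ∏ t ∈ Finset.range T,
    pvec η (Ltil η ℓ ω t) ((ω t).1)
      * f (anonProfile (σ t) (Pi.single ((ω t).1) 1)) ((ω t).2)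

/-- Extension of a length-`T` trajectory to an infinite one (by junk values). -/
def extTraj {n m T : ℕ} (hn : 0 < n) (hm : 0 < m)
    (ω : Fin T → Fin n × Fin m) : ℕ → Fin n × Fin m :=
  fun t => if h : t < T then ω ⟨t, h⟩ else (⟨0, hn⟩, ⟨0, hm⟩)

/-!
Along every trajectory the importance-weighted estimates `ℓ̃` are nonnegative losses fed to
exponential weights, so the potential `log ∑ᵢ exp(-η L̃ᵢ)` (with `e^{-x} ≤ 1 - x + x²/2`) bounds
the realized loss by `L̃_T(k) + ln n / η + (η/2) ∑ₜ ℓₜ(aₜ)² / pₜ(iₜ)`. Averaging over the sequential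
sampling, the tower property turns `L̃_T(k)` into the true cumulative loss of voter `k`, bounds each
second-moment term by `n`, and replaces the realized loss by the expected loss of the elected
voters. The choice of `η` balances `ln n / η` against `η T n / 2`.
-/

namespace SequentialSampling

variable {X : Type*}

def extendPath (x₀ : X) {T : ℕ} (ω : Fin T → X) : ℕ → X :=
  fun t => if h : t < T then ω ⟨t, h⟩ else x₀

lemma extendPath_snoc (x₀ : X) {T : ℕ} (ω : Fin T → X) (x : X) :
    extendPath x₀ (Fin.snoc ω x : Fin (T + 1) → X) = Function.update (extendPath x₀ ω) T x := by
  funext t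
  rcases lt_trichotomy t T with h | rfl | h
  · simp [extendPath, Fin.snoc, h, h.ne, h.trans (Nat.lt_succ_self T)]
  · simp [extendPath, Fin.snoc]
  · simp [extendPath, h.ne', h.not_gt, (Nat.succ_le_of_lt h).not_gt]

variable [Fintype X]

/-- `κ t ω` is the law of the draw at time `t` given the path `ω`. -/
structure IsSequentialKernel (κ : ℕ → (ℕ → X) → X → ℝ) : Prop where
  nonneg : ∀ t ω x, 0 ≤ κ t ω x
  sum_eq_one : ∀ t ω, ∑ x, κ t ω x = 1
  congr : ∀ t ω ω', (∀ s < t, ω s = ω' s) → κ t ω = κ t ω'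

def Adapted (ψ : ℕ → (ℕ → X) → ℝ) : Prop :=
  ∀ t ω ω', (∀ s ≤ t, ω s = ω' s) → ψ t ω = ψ t ω'

def pathProb (κ : ℕ → (ℕ → X) → X → ℝ) (ω : ℕ → X) (T : ℕ) : ℝ :=
  ∏ t ∈ range T, κ t ω (ω t)

def pathExpect (κ : ℕ → (ℕ → X) → X → ℝ) (x₀ : X) (T : ℕ) (φ : (ℕ → X) → ℝ) : ℝ :=
  ∑ ω : Fin T → X, pathProb κ (extendPath x₀ ω) T * φ (extendPath x₀ ω)

def stepMean (κ : ℕ → (ℕ → X) → X → ℝ) (t : ℕ) (φ : (ℕ → X) → ℝ) (ω : ℕ → X) : ℝ :=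
  ∑ x, κ t ω x * φ (Function.update ω t x)

variable {κ : ℕ → (ℕ → X) → X → ℝ} (x₀ : X)

lemma pathProb_nonneg (hκ : IsSequentialKernel κ) (ω : ℕ → X) (T : ℕ) : 0 ≤ pathProb κ ω T :=
  prod_nonneg fun t _ => hκ.nonneg t ω (ω t)

lemma pathProb_update (hκ : IsSequentialKernel κ) (ω : ℕ → X) (T : ℕ) (x : X) :
    pathProb κ (Function.update ω T x) (T + 1) = pathProb κ ω T * κ T ω x := by
  have hagree : ∀ s < T, Function.update ω T x s = ω s :=
    fun s hs => Function.update_of_ne hs.ne _ _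
  rw [pathProb, prod_range_succ, Function.update_self, hκ.congr T _ _ hagree]
  congr 1
  refine prod_congr rfl fun t ht => ?_
  have ht : t < T := mem_range.mp ht
  rw [hκ.congr t _ ω fun s hs => hagree s (hs.trans ht), hagree t ht]

lemma pathExpect_succ (hκ : IsSequentialKernel κ) (T : ℕ) (φ : (ℕ → X) → ℝ) :
    pathExpect κ x₀ (T + 1) φ = pathExpect κ x₀ T (stepMean κ T φ) := by
  rw [pathExpect, ← (Fin.snocEquiv fun _ => X).sum_comp, Fintype.sum_prod_type, sum_comm]
  refine sum_congr rfl fun ω _ => ?_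
  rw [stepMean, mul_sum]
  refine sum_congr rfl fun x _ => ?_
  change pathProb κ (extendPath x₀ (Fin.snoc ω x : Fin (T + 1) → X)) (T + 1) *
    φ (extendPath x₀ (Fin.snoc ω x : Fin (T + 1) → X)) = _
  rw [extendPath_snoc, pathProb_update hκ]
  ring

lemma pathExpect_add (T : ℕ) (φ ψ : (ℕ → X) → ℝ) :
    pathExpect κ x₀ T (fun ω => φ ω + ψ ω) = pathExpect κ x₀ T φ + pathExpect κ x₀ T ψ := by
  simp only [pathExpect, mul_add, sum_add_distrib]

lemma pathExpect_const_mul (T : ℕ) (c : ℝ) (φ : (ℕ → X) → ℝ) :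
    pathExpect κ x₀ T (fun ω => c * φ ω) = c * pathExpect κ x₀ T φ := by
  simp only [pathExpect, mul_sum, mul_left_comm]

lemma pathExpect_mono (hκ : IsSequentialKernel κ) (T : ℕ) {φ ψ : (ℕ → X) → ℝ}
    (h : ∀ ω, φ ω ≤ ψ ω) : pathExpect κ x₀ T φ ≤ pathExpect κ x₀ T ψ :=
  sum_le_sum fun _ _ => mul_le_mul_of_nonneg_left (h _) (pathProb_nonneg hκ _ T)

lemma stepMean_const (hκ : IsSequentialKernel κ) (t : ℕ) (c : ℝ) :
    stepMean κ t (fun _ => c) = fun _ => c := by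
  funext ω
  rw [stepMean, ← sum_mul, hκ.sum_eq_one, one_mul]

lemma pathExpect_const (hκ : IsSequentialKernel κ) (T : ℕ) (c : ℝ) :
    pathExpect κ x₀ T (fun _ => c) = c := by
  induction T with
  | zero => simp [pathExpect, pathProb]
  | succ T ih =>
    rw [pathExpect_succ x₀ hκ, stepMean_const hκ, ih]

lemma pathExpect_sum_eq_sum_stepMean (hκ : IsSequentialKernel κ) {ψ : ℕ → (ℕ → X) → ℝ}
    (hψ : Adapted ψ) (T : ℕ) :
    pathExpect κ x₀ T (fun ω => ∑ t ∈ range T, ψ t ω) =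
      ∑ t ∈ range T, pathExpect κ x₀ t (stepMean κ t (ψ t)) := by
  induction T with
  | zero => simp [pathExpect_const x₀ hκ]
  | succ T ih =>
    have hstep : ∀ ω, stepMean κ T (fun ω => ∑ t ∈ range (T + 1), ψ t ω) ω =
        ∑ t ∈ range T, ψ t ω + stepMean κ T (ψ T) ω := by
      intro ω
      have hpast : ∀ x, ∑ t ∈ range T, ψ t (Function.update ω T x) = ∑ t ∈ range T, ψ t ω :=
        fun x => sum_congr rfl fun t ht => hψ t _ _ fun s hs =>
          Function.update_of_ne (hs.trans_lt (mem_range.mp ht)).ne _ _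
      simp only [stepMean, sum_range_succ, hpast, mul_add, sum_add_distrib, ← sum_mul,
        hκ.sum_eq_one, one_mul]
    rw [pathExpect_succ x₀ hκ, funext hstep, pathExpect_add, ih, sum_range_succ]

lemma pathExpect_sum_eq (hκ : IsSequentialKernel κ) {ψ : ℕ → (ℕ → X) → ℝ} (hψ : Adapted ψ)
    {c : ℕ → ℝ} (hc : ∀ t, stepMean κ t (ψ t) = fun _ => c t) (T : ℕ) :
    pathExpect κ x₀ T (fun ω => ∑ t ∈ range T, ψ t ω) = ∑ t ∈ range T, c t := by
  simp only [pathExpect_sum_eq_sum_stepMean x₀ hκ hψ, hc, pathExpect_const x₀ hκ]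

lemma pathExpect_sum_le (hκ : IsSequentialKernel κ) {ψ : ℕ → (ℕ → X) → ℝ} (hψ : Adapted ψ)
    {c : ℕ → ℝ} (hc : ∀ t ω, stepMean κ t (ψ t) ω ≤ c t) (T : ℕ) :
    pathExpect κ x₀ T (fun ω => ∑ t ∈ range T, ψ t ω) ≤ ∑ t ∈ range T, c t := by
  rw [pathExpect_sum_eq_sum_stepMean x₀ hκ hψ]
  refine sum_le_sum fun t _ => ?_
  calc pathExpect κ x₀ t (stepMean κ t (ψ t)) ≤ pathExpect κ x₀ t (fun _ => c t) :=
        pathExpect_mono x₀ hκ t (hc t)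
    _ = c t := pathExpect_const x₀ hκ t (c t)

end SequentialSampling

section Hedge

open Real

variable {n : ℕ} {η : ℝ}

lemma sum_exp_neg_mul_pos (hn : 0 < n) (η : ℝ) (L : Fin n → ℝ) :
    0 < ∑ i, exp (-η * L i) :=
  sum_pos (fun _ _ => exp_pos _) (univ_nonempty_iff.mpr ⟨⟨0, hn⟩⟩)

lemma pvec_pos (hn : 0 < n) (η : ℝ) (L : Fin n → ℝ) (i : Fin n) : 0 < pvec η L i :=
  div_pos (exp_pos _) (sum_exp_neg_mul_pos hn η L)

lemma sum_pvec (hn : 0 < n) (η : ℝ) (L : Fin n → ℝ) : ∑ i, pvec η L i = 1 := by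
  simp only [pvec]
  rw [← sum_div, div_self (sum_exp_neg_mul_pos hn η L).ne']

lemma exp_neg_le_one_sub_add_sq_div_two {x : ℝ} (hx : 0 ≤ x) :
    exp (-x) ≤ 1 - x + x ^ 2 / 2 := by
  have hq := quadratic_le_exp_of_nonneg hx
  -- `(1 + x + x²/2)(1 - x + x²/2) = 1 + x⁴/4`
  rw [exp_neg, inv_le_iff_one_le_mul₀ (exp_pos x)]
  nlinarith [sq_nonneg (x - 1), pow_nonneg hx 4, mul_le_mul_of_nonneg_left hq
    (by nlinarith [sq_nonneg (x - 1)] : (0 : ℝ) ≤ 1 - x + x ^ 2 / 2)]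

lemma sum_exp_add_le (hn : 0 < n) (hη : 0 ≤ η) (L g : Fin n → ℝ) (hg : ∀ i, 0 ≤ g i) :
    ∑ i, exp (-η * (L i + g i)) ≤ (∑ i, exp (-η * L i)) *
      exp (-η * ∑ i, pvec η L i * g i + η ^ 2 / 2 * ∑ i, pvec η L i * g i ^ 2) := by
  set W := ∑ i, exp (-η * L i)
  have hW : 0 < W := sum_exp_neg_mul_pos hn η L
  have hweight : ∀ i, exp (-η * L i) = W * pvec η L i := fun i => by
    rw [pvec, mul_div_cancel₀ _ hW.ne']
  calc ∑ i, exp (-η * (L i + g i))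
      ≤ ∑ i, W * pvec η L i * (1 - η * g i + (η * g i) ^ 2 / 2) := by
        refine sum_le_sum fun i _ => ?_
        rw [mul_add, exp_add, hweight, neg_mul]
        exact mul_le_mul_of_nonneg_left (exp_neg_le_one_sub_add_sq_div_two
          (mul_nonneg hη (hg i))) (mul_nonneg hW.le (pvec_pos hn η L i).le)
    _ = W * (-η * ∑ i, pvec η L i * g i + η ^ 2 / 2 * ∑ i, pvec η L i * g i ^ 2 + 1) := by
        have hexpand : ∀ i, W * pvec η L i * (1 - η * g i + (η * g i) ^ 2 / 2) =
            W * pvec η L i + W * (-η * (pvec η L i * g i)) +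
              W * (η ^ 2 / 2 * (pvec η L i * g i ^ 2)) := fun i => by ring
        simp only [hexpand, sum_add_distrib, ← mul_sum, sum_pvec hn]
        ring
    _ ≤ _ := mul_le_mul_of_nonneg_left (add_one_le_exp _) hW.le

theorem hedge_regret_le (hn : 0 < n) (hη : 0 < η) {L g : ℕ → Fin n → ℝ}
    (hg : ∀ t i, 0 ≤ g t i) (hL0 : L 0 = 0) (hL : ∀ t, L (t + 1) = L t + g t) (T : ℕ)
    (k : Fin n) :
    ∑ t ∈ range T, ∑ i, pvec η (L t) i * g t i ≤
      L T k + log n / η + η / 2 * ∑ t ∈ range T, ∑ i, pvec η (L t) i * g t i ^ 2 := by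
  set Φ : ℕ → ℝ := fun t => log (∑ i, exp (-η * L t i))
  have hstep : ∀ t, Φ (t + 1) - Φ t ≤
      -η * ∑ i, pvec η (L t) i * g t i + η ^ 2 / 2 * ∑ i, pvec η (L t) i * g t i ^ 2 := by
    intro t
    have h := log_le_log (sum_exp_neg_mul_pos hn η _) (sum_exp_add_le hn hη.le (L t) (g t) (hg t))
    rw [log_mul (sum_exp_neg_mul_pos hn η _).ne' (exp_pos _).ne', log_exp] at h
    simp only [Φ, hL, Pi.add_apply]
    linarith
  have hΦ0 : Φ 0 = log n := by simp [Φ, hL0]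
  have hΦT : -η * L T k ≤ Φ T := by
    rw [← log_exp (-η * L T k)]
    exact log_le_log (exp_pos _) (single_le_sum (f := fun i => exp (-η * L T i))
      (fun _ _ => (exp_pos _).le) (mem_univ k))
  have htele : Φ T - Φ 0 ≤ -η * ∑ t ∈ range T, ∑ i, pvec η (L t) i * g t i +
      η ^ 2 / 2 * ∑ t ∈ range T, ∑ i, pvec η (L t) i * g t i ^ 2 := by
    rw [← sum_range_sub, mul_sum, mul_sum, ← sum_add_distrib]
    exact sum_le_sum fun t _ => hstep t
  have hlog : log n / η * η = log n := div_mul_cancel₀ _ hη.ne'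
  nlinarith

lemma div_add_mul_eq_sqrt {A B η : ℝ} (hA : 0 < A) (hB : 0 < B) (hη : η = √(2 * A / B)) :
    A / η + η / 2 * B = √(2 * B * A) := by
  have hη0 : 0 < η := hη ▸ sqrt_pos.2 (by positivity)
  have hηsq : η ^ 2 = 2 * A / B := hη ▸ sq_sqrt (by positivity)
  have hηB : η * B = √(2 * B * A) := by
    rw [← sqrt_sq (by positivity : 0 ≤ η * B), mul_pow, hηsq]
    congr 1
    field_simp
  have hA : A = η ^ 2 * B / 2 := by rw [hηsq]; field_simp
  rw [← hηB, hA]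
  field_simp
  ring

end Hedge

namespace Alg2

open SequentialSampling

variable {n m : ℕ} {η : ℝ} {f : (Rk m → ℝ) → Fin m → ℝ} {σ : ℕ → Fin n → Rk m}
  {ℓ : ℕ → Fin m → ℝ}

noncomputable def kernel (η : ℝ) (f : (Rk m → ℝ) → Fin m → ℝ) (σ : ℕ → Fin n → Rk m)
    (ℓ : ℕ → Fin m → ℝ) (t : ℕ) (ω : ℕ → Fin n × Fin m) (x : Fin n × Fin m) : ℝ :=
  pvec η (Ltil η ℓ ω t) x.1 * f (anonProfile (σ t) (Pi.single x.1 1)) x.2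

noncomputable def voterLoss (f : (Rk m → ℝ) → Fin m → ℝ) (σ : ℕ → Fin n → Rk m)
    (ℓ : ℕ → Fin m → ℝ) (t : ℕ) (i : Fin n) : ℝ :=
  expLoss f (anonProfile (σ t) (Pi.single i 1)) (ℓ t)

noncomputable def lossEstimate (η : ℝ) (ℓ : ℕ → Fin m → ℝ) (ω : ℕ → Fin n × Fin m) (t : ℕ)
    (i : Fin n) : ℝ :=
  if i = (ω t).1 then ℓ t (ω t).2 / pvec η (Ltil η ℓ ω t) (ω t).1 else 0

lemma Ltil_congr (η : ℝ) (ℓ : ℕ → Fin m → ℝ) {ω ω' : ℕ → Fin n × Fin m} :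
    ∀ t, (∀ s < t, ω s = ω' s) → Ltil η ℓ ω t = Ltil η ℓ ω' t
  | 0, _ => rfl
  | t + 1, h => by
    have ih := Ltil_congr η ℓ t fun s hs => h s (hs.trans (Nat.lt_succ_self t))
    funext i
    simp only [Ltil, ih, h t (Nat.lt_succ_self t)]

lemma Ltil_eq_sum_lossEstimate (η : ℝ) (ℓ : ℕ → Fin m → ℝ) (ω : ℕ → Fin n × Fin m) (T : ℕ)
    (k : Fin n) : Ltil η ℓ ω T k = ∑ t ∈ range T, lossEstimate η ℓ ω t k := by
  induction T with
  | zero => rfl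
  | succ T ih => rw [sum_range_succ, ← ih]; rfl

lemma adapted_of_Ltil (η : ℝ) (ℓ : ℕ → Fin m → ℝ)
    (F : ℕ → (Fin n → ℝ) → Fin n × Fin m → ℝ) :
    Adapted fun t ω => F t (Ltil η ℓ ω t) (ω t) := fun t ω ω' h => by
  show F t (Ltil η ℓ ω t) (ω t) = F t (Ltil η ℓ ω' t) (ω' t)
  rw [Ltil_congr η ℓ t fun s hs => h s hs.le, h t le_rfl]

lemma sum_kernel_mul (t : ℕ) (ω : ℕ → Fin n × Fin m) (G : Fin n × Fin m → ℝ) :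
    ∑ x, kernel η f σ ℓ t ω x * G x =
      ∑ i, pvec η (Ltil η ℓ ω t) i * ∑ a, f (anonProfile (σ t) (Pi.single i 1)) a * G (i, a) := by
  simp only [kernel, Fintype.sum_prod_type, mul_sum, mul_assoc]

lemma stepMean_kernel (F : (Fin n → ℝ) → Fin n × Fin m → ℝ) (t : ℕ) (ω : ℕ → Fin n × Fin m) :
    stepMean (kernel η f σ ℓ) t (fun ω => F (Ltil η ℓ ω t) (ω t)) ω =
      ∑ x, kernel η f σ ℓ t ω x * F (Ltil η ℓ ω t) x := by
  refine sum_congr rfl fun x _ => ?_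
  dsimp only
  rw [Function.update_self, Ltil_congr η ℓ t fun s hs => Function.update_of_ne hs.ne _ _]

lemma isSequentialKernel_kernel (hn : 0 < n) (hf : ∀ π, IsDist (f π)) :
    IsSequentialKernel (kernel η f σ ℓ) where
  nonneg t ω x := mul_nonneg (pvec_pos hn η _ _).le ((hf _).1 _)
  sum_eq_one t ω := by
    simpa [(hf _).2, sum_pvec hn] using sum_kernel_mul (f := f) (σ := σ) t ω fun _ => 1
  congr t ω ω' h := by
    funext x
    rw [kernel, kernel, Ltil_congr η ℓ t h]

variable (x₀ : Fin n × Fin m)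

lemma pathExpect_Ltil (hn : 0 < n) (hf : ∀ π, IsDist (f π)) (T : ℕ) (k : Fin n) :
    pathExpect (kernel η f σ ℓ) x₀ T (fun ω => Ltil η ℓ ω T k) =
      ∑ t ∈ range T, voterLoss f σ ℓ t k := by
  simp only [Ltil_eq_sum_lossEstimate]
  refine pathExpect_sum_eq x₀ (isSequentialKernel_kernel hn hf)
    (adapted_of_Ltil η ℓ fun t L x => if k = x.1 then ℓ t x.2 / pvec η L x.1 else 0)
    (fun t => ?_) T
  funext ω
  rw [stepMean_kernel (fun L x => if k = x.1 then ℓ t x.2 / pvec η L x.1 else 0), sum_kernel_mul]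
  have hterm : ∀ i, pvec η (Ltil η ℓ ω t) i * ∑ a, f (anonProfile (σ t) (Pi.single i 1)) a *
      (if k = i then ℓ t a / pvec η (Ltil η ℓ ω t) i else 0) =
      if k = i then voterLoss f σ ℓ t i else 0 := by
    intro i
    split_ifs
    · rw [mul_sum, voterLoss, expLoss]
      refine sum_congr rfl fun a _ => ?_
      field_simp [(pvec_pos hn η (Ltil η ℓ ω t) i).ne']
    · simp
  simp only [hterm, sum_ite_eq, mem_univ, if_true]

lemma pathExpect_sum_voterLoss (hn : 0 < n) (hf : ∀ π, IsDist (f π)) (T : ℕ) :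
    pathExpect (kernel η f σ ℓ) x₀ T (fun ω => ∑ t ∈ range T, voterLoss f σ ℓ t (ω t).1) =
      pathExpect (kernel η f σ ℓ) x₀ T (fun ω => ∑ t ∈ range T, ℓ t (ω t).2) := by
  have hκ := isSequentialKernel_kernel (σ := σ) (ℓ := ℓ) (η := η) hn hf
  rw [pathExpect_sum_eq_sum_stepMean x₀ hκ
      (adapted_of_Ltil η ℓ fun t _ x => voterLoss f σ ℓ t x.1),
    pathExpect_sum_eq_sum_stepMean x₀ hκ (adapted_of_Ltil η ℓ fun t _ x => ℓ t x.2)]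
  refine sum_congr rfl fun t _ => congrArg _ (funext fun ω => ?_)
  rw [stepMean_kernel (fun _ x => voterLoss f σ ℓ t x.1), stepMean_kernel (fun _ x => ℓ t x.2),
    sum_kernel_mul, sum_kernel_mul]
  refine sum_congr rfl fun i _ => congrArg _ ?_
  dsimp only
  rw [← sum_mul, (hf _).2, one_mul]
  rfl

lemma pathExpect_sum_sq_div_pvec_le (hn : 0 < n) (hf : ∀ π, IsDist (f π))
    (hℓ : ∀ t a, ℓ t a ∈ Set.Icc (0 : ℝ) 1) (T : ℕ) :
    pathExpect (kernel η f σ ℓ) x₀ T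
        (fun ω => ∑ t ∈ range T, ℓ t (ω t).2 ^ 2 / pvec η (Ltil η ℓ ω t) (ω t).1) ≤
      T * n := by
  have hstep : ∀ t ω, stepMean (kernel η f σ ℓ) t
      (fun ω => ℓ t (ω t).2 ^ 2 / pvec η (Ltil η ℓ ω t) (ω t).1) ω ≤ n := by
    intro t ω
    rw [stepMean_kernel (fun L x => ℓ t x.2 ^ 2 / pvec η L x.1), sum_kernel_mul]
    calc ∑ i, pvec η (Ltil η ℓ ω t) i *
          ∑ a, f (anonProfile (σ t) (Pi.single i 1)) a * (ℓ t a ^ 2 / pvec η (Ltil η ℓ ω t) i)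
        = ∑ i, ∑ a, f (anonProfile (σ t) (Pi.single i 1)) a * ℓ t a ^ 2 := by
          refine sum_congr rfl fun i _ => ?_
          rw [mul_sum]
          refine sum_congr rfl fun a _ => ?_
          field_simp [(pvec_pos hn η (Ltil η ℓ ω t) i).ne']
      _ ≤ ∑ i : Fin n, ∑ a, f (anonProfile (σ t) (Pi.single i 1)) a :=
          sum_le_sum fun i _ => sum_le_sum fun a _ => mul_le_of_le_one_right ((hf _).1 a)
            (pow_le_one₀ (hℓ t a).1 (hℓ t a).2)
      _ = n := by simp [(hf _).2]
  calc _ ≤ ∑ _t ∈ range T, (n : ℝ) := pathExpect_sum_le x₀ (isSequentialKernel_kernel hn hf)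
        (adapted_of_Ltil η ℓ fun t L x => ℓ t x.2 ^ 2 / pvec η L x.1) hstep T
    _ = T * n := by simp

lemma sum_loss_le_Ltil_add (hn : 0 < n) (hη : 0 < η) (hℓ : ∀ t a, ℓ t a ∈ Set.Icc (0 : ℝ) 1)
    (ω : ℕ → Fin n × Fin m) (T : ℕ) (k : Fin n) :
    ∑ t ∈ range T, ℓ t (ω t).2 ≤ Ltil η ℓ ω T k + Real.log n / η +
      η / 2 * ∑ t ∈ range T, ℓ t (ω t).2 ^ 2 / pvec η (Ltil η ℓ ω t) (ω t).1 := by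
  have hp : ∀ t, pvec η (Ltil η ℓ ω t) (ω t).1 ≠ 0 := fun t => (pvec_pos hn η _ _).ne'
  have hmean : ∀ t, ∑ i, pvec η (Ltil η ℓ ω t) i * lossEstimate η ℓ ω t i = ℓ t (ω t).2 := by
    intro t
    simp only [lossEstimate, mul_ite, mul_zero, sum_ite_eq', mem_univ, if_true]
    exact mul_div_cancel₀ _ (hp t)
  have hsq : ∀ t, ∑ i, pvec η (Ltil η ℓ ω t) i * lossEstimate η ℓ ω t i ^ 2 =
      ℓ t (ω t).2 ^ 2 / pvec η (Ltil η ℓ ω t) (ω t).1 := by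
    intro t
    simp only [lossEstimate, ite_pow, zero_pow two_ne_zero, mul_ite, mul_zero, sum_ite_eq',
      mem_univ, if_true]
    field_simp [hp t]
  have hg : ∀ t i, 0 ≤ lossEstimate η ℓ ω t i := fun t i => by
    unfold lossEstimate
    split_ifs
    · exact div_nonneg (hℓ t _).1 (pvec_pos hn η _ _).le
    · exact le_rfl
  simpa only [hmean, hsq] using
    hedge_regret_le (L := Ltil η ℓ ω) hn hη hg rfl (fun t => rfl) T k

theorem regret_le (hn : 0 < n) (hf : ∀ π, IsDist (f π)) (hℓ : ∀ t a, ℓ t a ∈ Set.Icc (0 : ℝ) 1)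
    (hη : 0 < η) (T : ℕ) (k : Fin n) :
    pathExpect (kernel η f σ ℓ) x₀ T (fun ω => ∑ t ∈ range T, voterLoss f σ ℓ t (ω t).1) ≤
      ∑ t ∈ range T, voterLoss f σ ℓ t k + Real.log n / η + η / 2 * (T * n) := by
  have hκ := isSequentialKernel_kernel (σ := σ) (ℓ := ℓ) (η := η) hn hf
  calc pathExpect (kernel η f σ ℓ) x₀ T (fun ω => ∑ t ∈ range T, voterLoss f σ ℓ t (ω t).1)
      = pathExpect (kernel η f σ ℓ) x₀ T (fun ω => ∑ t ∈ range T, ℓ t (ω t).2) :=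
        pathExpect_sum_voterLoss x₀ hn hf T
    _ ≤ pathExpect (kernel η f σ ℓ) x₀ T (fun ω => Ltil η ℓ ω T k + Real.log n / η +
          η / 2 * ∑ t ∈ range T, ℓ t (ω t).2 ^ 2 / pvec η (Ltil η ℓ ω t) (ω t).1) :=
        pathExpect_mono x₀ hκ T fun ω => sum_loss_le_Ltil_add hn hη hℓ ω T k
    _ = pathExpect (kernel η f σ ℓ) x₀ T (fun ω => Ltil η ℓ ω T k) + Real.log n / η +
          η / 2 * pathExpect (kernel η f σ ℓ) x₀ T
            (fun ω => ∑ t ∈ range T, ℓ t (ω t).2 ^ 2 / pvec η (Ltil η ℓ ω t) (ω t).1) := by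
        rw [pathExpect_add, pathExpect_add, pathExpect_const x₀ hκ, pathExpect_const_mul]
    _ ≤ _ := by
        rw [pathExpect_Ltil x₀ hn hf]
        gcongr
        exact pathExpect_sum_sq_div_pvec_le x₀ hn hf hℓ T

end Alg2

/-- Algorithm 2 with `η = √(2 ln n / (Tn))` has expected regret at
most `√(2 T n ln n)`: the expected total loss of the alternatives it elects exceeds
the total loss of the best voter in hindsight by at most `√(2 T n ln n)`. -/
theorem alg2_regret_bound (n m T : ℕ) (hn : 0 < n) (hm : 0 < m)
    (f : (Rk m → ℝ) → Fin m → ℝ) (hf : ∀ π, IsDist (f π))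
    (σ : ℕ → Fin n → Rk m) (ℓ : ℕ → Fin m → ℝ)
    (hℓ : ∀ t a, ℓ t a ∈ Set.Icc (0 : ℝ) 1)
    (η : ℝ) (hη : η = Real.sqrt (2 * Real.log n / (T * n))) :
    (∑ ω : Fin T → Fin n × Fin m,
        trajProb η f σ ℓ (extTraj hn hm ω) T *
          ∑ t ∈ Finset.range T,
            expLoss f (anonProfile (σ t) (Pi.single ((extTraj hn hm ω t).1) 1)) (ℓ t))
      - Finset.univ.inf' (Finset.univ_nonempty_iff.mpr (Fin.pos_iff_nonempty.mp hn))
          (fun i => ∑ t ∈ Finset.range T,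
            expLoss f (anonProfile (σ t) (Pi.single i 1)) (ℓ t))
      ≤ Real.sqrt (2 * T * n * Real.log n) := by
  open SequentialSampling Alg2 in
  obtain ⟨k, -, hk⟩ := exists_mem_eq_inf' (univ_nonempty_iff.mpr (Fin.pos_iff_nonempty.mp hn))
    fun i => ∑ t ∈ range T, voterLoss f σ ℓ t i
  show pathExpect (kernel η f σ ℓ) (⟨0, hn⟩, ⟨0, hm⟩) T
      (fun ω => ∑ t ∈ range T, voterLoss f σ ℓ t (ω t).1) - univ.inf' _
        (fun i => ∑ t ∈ range T, voterLoss f σ ℓ t i) ≤ _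
  rw [hk, sub_le_iff_le_add']
  have hκ := isSequentialKernel_kernel (σ := σ) (ℓ := ℓ) (η := η) hn hf
  -- for `T = 0` or `n = 1` the prescribed step size is `η = 0`, outside the Hedge analysis
  rcases Nat.eq_zero_or_pos T with rfl | hT
  · simp [pathExpect_const _ hκ]
  rcases (Nat.one_le_iff_ne_zero.mpr hn.ne').eq_or_lt with rfl | hn2
  · have hconst : (fun ω : ℕ → Fin 1 × Fin m => ∑ t ∈ range T, voterLoss f σ ℓ t (ω t).1) =
        fun _ => ∑ t ∈ range T, voterLoss f σ ℓ t k :=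
      funext fun ω => sum_congr rfl fun t _ => by rw [Subsingleton.elim (ω t).1 k]
    rw [hconst, pathExpect_const _ hκ]
    exact le_add_of_nonneg_right (Real.sqrt_nonneg _)
  have hlog : 0 < Real.log n := Real.log_pos (by exact_mod_cast hn2)
  have hη0 : 0 < η := hη ▸ Real.sqrt_pos.2 (by positivity)
  calc _ ≤ ∑ t ∈ range T, voterLoss f σ ℓ t k + (Real.log n / η + η / 2 * (T * n)) := by
        linarith [regret_le (σ := σ) (⟨0, hn⟩, ⟨0, hm⟩) hn hf hℓ hη0 T k]
    _ = _ := by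
        rw [div_add_mul_eq_sqrt hlog (by positivity) hη]
        ring_nf
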